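/- arXiv:1209.0220 — 6 statements merged into one kernel-verified Lean document; each statement's English description precedes it below -/
import Mathlib

section
/- Let A be a finite alphabet and S a finite set of finite words over A. If S defines a bi-infinite word w over A, then w is periodic, i.e. there exists n ≥ 1 such that w (i + n) = w i for all i ∈ ℤ. -/
/-- `u` is a (finite) factor of the bi-infinite word `w`. -/
def IsFactor {A : Type} (w : ℤ → A) (u : List A) : Prop :=
  ∃ i : ℤ, u = (List.range u.length).map fun j => w (i + j)

/-- `w'` is a shift of `w`. -/
def IsShift {A : Type} (w' w : ℤ → A) : Prop :=
  ∃ t : ℤ, ∀ i : ℤ, w' i = w (i + t)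

/-- A set `S` of finite words defines the bi-infinite word `w`. -/
def Defines {A : Type} (S : Set (List A)) (w : ℤ → A) : Prop :=
  (∀ u ∈ S, ¬ IsFactor w u) ∧
  ∀ w' : ℤ → A, (∀ u ∈ S, ¬ IsFactor w' u) → IsShift w' w

/-- `w` has period `n`. -/
def HasPeriod {A : Type} (w : ℤ → A) (n : ℕ) : Prop :=
  ∀ i : ℤ, w (i + n) = w i

/-- `n` is the least period of `w`. -/
def IsLeastPeriod {A : Type} (w : ℤ → A) (n : ℕ) : Prop :=
  1 ≤ n ∧ HasPeriod w n ∧ ∀ m : ℕ, 1 ≤ m → HasPeriod w m → n ≤ m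

/-- `u` is a minimal forbidden word of `w`: it is not a factor of `w`, but every
proper factor of `u` is a factor of `w`. -/
def MinForbidden {A : Type} (w : ℤ → A) (u : List A) : Prop :=
  ¬ IsFactor w u ∧ ∀ v : List A, v <:+: u → v ≠ u → IsFactor w v

/-!
If every word of `S` has length at most `N`, pigeonhole gives two positions `a < a + p` at which
`w` reads the same block of length `N`. Repeating the segment `w a, …, w (a + p - 1)` forever
gives a `p`-periodic word each of whose windows of length `N` already occurs in `w`, so it avoids
`S` too. Hence it is a shift of `w`, and `w` inherits the period `p`.
-/

section Words

variable {A : Type}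

theorem isFactor_iff {w : ℤ → A} {u : List A} :
    IsFactor w u ↔ ∃ i : ℤ, u = (List.range u.length).map fun j : ℕ => w (i + j) := by
  simp only [IsFactor, bind_pure_comp, List.map_eq_map, List.map_map]
  rfl

theorem IsFactor.of_window_eq {w w' : ℤ → A} {u : List A} {N : ℕ} (hu : u.length ≤ N)
    (hwin : ∀ q : ℤ, ∃ r : ℤ, ∀ j : ℕ, j < N → w' (q + j) = w (r + j)) (h : IsFactor w' u) :
    IsFactor w u := by
  obtain ⟨q, hq⟩ := isFactor_iff.mp h
  obtain ⟨r, hr⟩ := hwin q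
  exact isFactor_iff.mpr
    ⟨r, hq.trans <| List.map_congr_left fun j hj => hr j (by grind)⟩

theorem HasPeriod.of_isShift {w w' : ℤ → A} {n : ℕ} (h : HasPeriod w' n) (hs : IsShift w' w) :
    HasPeriod w n := by
  obtain ⟨t, ht⟩ := hs
  intro i
  calc w (i + n) = w' (i - t + n) := by rw [ht]; ring_nf
    _ = w' (i - t) := h _
    _ = w i := by rw [ht]; ring_nf

def periodicExtension (w : ℤ → A) (a : ℤ) (p : ℕ) : ℤ → A :=
  fun k => w (a + (k - a) % p)

theorem hasPeriod_periodicExtension (w : ℤ → A) (a : ℤ) (p : ℕ) :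
    HasPeriod (periodicExtension w a p) p := by
  intro i
  simp only [periodicExtension, add_sub_right_comm, Int.add_emod_right]

section Repeat

variable {w : ℤ → A} {a : ℤ} {p N : ℕ}

theorem apply_add_eq_apply_add_emod (hp : 0 < p)
    (hrep : ∀ j : ℕ, j < N → w (a + p + j) = w (a + j)) :
    ∀ m : ℕ, m < N + p → w (a + m) = w (a + (m : ℤ) % p) := by
  intro m
  induction m using Nat.strong_induction_on with
  | _ m ih =>
    intro hm
    rcases lt_or_ge m p with hlt | hge
    · rw [Int.emod_eq_of_lt (by omega) (by omega)]
    · calc w (a + m) = w (a + p + (m - p : ℕ)) := by congr 1; omega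
        _ = w (a + (m - p : ℕ)) := hrep _ (by omega)
        _ = w (a + ((m - p : ℕ) : ℤ) % p) := ih _ (by omega) (by omega)
        _ = w (a + (m : ℤ) % p) := by
          rw [Nat.cast_sub hge, Int.sub_emod_right]

theorem periodicExtension_window (hp : 0 < p)
    (hrep : ∀ j : ℕ, j < N → w (a + p + j) = w (a + j)) (q : ℤ) :
    ∃ r : ℤ, ∀ j : ℕ, j < N → periodicExtension w a p (q + j) = w (r + j) := by
  obtain ⟨r, hr⟩ : ∃ r : ℕ, (q - a) % p = r :=
    ⟨_, (Int.toNat_of_nonneg (Int.emod_nonneg _ (by omega))).symm⟩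
  have hrp : r < p := by have := Int.emod_lt_of_pos (q - a) (b := p) (by omega); omega
  refine ⟨a + r, fun j hj => ?_⟩
  have hmod : (q + j - a) % p = ((r : ℤ) + j) % p := by
    rw [add_sub_right_comm, ← Int.emod_add_emod, hr]
  have hseg := apply_add_eq_apply_add_emod hp hrep (r + j) (by omega)
  push_cast at hseg
  rw [periodicExtension, hmod, ← hseg, add_assoc]

theorem Defines.hasPeriod_of_repeat {S : Set (List A)} (hdef : Defines S w)
    (hS : ∀ u ∈ S, u.length ≤ N) (hp : 0 < p)
    (hrep : ∀ j : ℕ, j < N → w (a + p + j) = w (a + j)) :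
    HasPeriod w p := by
  have havoid : ∀ u ∈ S, ¬ IsFactor (periodicExtension w a p) u := fun u hu hfac =>
    hdef.1 u hu (hfac.of_window_eq (hS u hu) (periodicExtension_window hp hrep))
  exact (hasPeriod_periodicExtension w a p).of_isShift (hdef.2 _ havoid)

end Repeat

theorem exists_window_repeat [Finite A] (w : ℤ → A) (N : ℕ) :
    ∃ a : ℤ, ∃ p : ℕ, 0 < p ∧ ∀ j : ℕ, j < N → w (a + p + j) = w (a + j) := by
  obtain ⟨a, b, hab, hwin⟩ :=
    Finite.exists_ne_map_eq_of_infinite fun k : ℤ => fun j : Fin N => w (k + j)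
  have hwin' : ∀ j : ℕ, j < N → w (a + j) = w (b + j) := fun j hj => congrFun hwin ⟨j, hj⟩
  rcases hab.lt_or_gt with hlt | hgt
  · refine ⟨a, (b - a).toNat, by omega, fun j hj => ?_⟩
    rw [hwin' j hj, Int.toNat_of_nonneg (by omega), add_sub_cancel]
  · refine ⟨b, (a - b).toNat, by omega, fun j hj => ?_⟩
    rw [← hwin' j hj, Int.toNat_of_nonneg (by omega), add_sub_cancel]

end Words

theorem finitely_defined_is_periodic {A : Type} [Fintype A]
    (S : Finset (List A)) (w : ℤ → A) (hdef : Defines (↑S) w) :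
    ∃ n : ℕ, 1 ≤ n ∧ HasPeriod w n := by
  obtain ⟨a, p, hp, hrep⟩ := exists_window_repeat w (S.sup List.length)
  exact ⟨p, hp, hdef.hasPeriod_of_repeat (fun _ => Finset.le_sup) hp hrep⟩
end

section
/- Let w be a periodic bi-infinite word over a finite alphabet A. Then the set of all minimal forbidden words of w defines w. -/
section
variable {A : Type} {w w' : ℤ → A}

theorem isFactor_iff_getElem {u : List A} :
    IsFactor w u ↔ ∃ i : ℤ, ∀ k (hk : k < u.length), u[k] = w (i + k) := by
  simp [IsFactor, List.ext_getElem_iff, ← List.map_eq_flatMap]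

theorem isFactor_ofFn (w : ℤ → A) (i : ℤ) (L : ℕ) :
    IsFactor w (List.ofFn fun k : Fin L => w (i + k)) :=
  isFactor_iff_getElem.mpr ⟨i, fun k hk => by simp⟩

theorem IsFactor.of_infix {u v : List A} (hu : IsFactor w u) (hv : v <:+: u) :
    IsFactor w v := by
  obtain ⟨s, t, rfl⟩ := hv
  obtain ⟨i, hi⟩ := isFactor_iff_getElem.mp hu
  refine isFactor_iff_getElem.mpr ⟨i + s.length, fun k hk => ?_⟩
  have hsk : s.length + k < (s ++ v ++ t).length := by simp; omega
  rw [show i + s.length + k = i + (s.length + k : ℕ) by push_cast; ring, ← hi _ hsk,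
    List.getElem_append_left (by simp; omega), List.getElem_append_right (by omega)]
  simp

/-- A shortest counterexample would itself be a minimal forbidden word of `w`. -/
theorem isFactor_of_forall_minForbidden_not_isFactor
    (h : ∀ u, MinForbidden w u → ¬ IsFactor w' u) {u : List A} (hu : IsFactor w' u) :
    IsFactor w u := by
  induction u using WellFounded.induction (measure List.length).wf with
  | h u ih =>
    by_contra hnot
    refine h u ⟨hnot, fun v hv hne => ih v ?_ (hu.of_infix hv)⟩ hu
    exact lt_of_le_of_ne hv.length_le fun hlen => hne (hv.sublist.eq_of_length hlen)

theorem HasPeriod.emod_add {n : ℕ} (hp : HasPeriod w n) (j x : ℤ) :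
    w (j % n + x) = w (j + x) := by
  rw [Int.emod_def, show j - n * (j / n) + x = j + x - j / n * n by ring]
  exact Function.Periodic.sub_int_mul_eq hp _

theorem HasPeriod.of_factors_subset {n : ℕ} (hp : HasPeriod w n)
    (hsub : ∀ u, IsFactor w' u → IsFactor w u) : HasPeriod w' n := by
  intro i
  obtain ⟨j, hj⟩ := isFactor_iff_getElem.mp (hsub _ (isFactor_ofFn w' i (n + 1)))
  have h0 := hj 0 (by simp)
  have hn := hj n (by simp)
  simp only [List.getElem_ofFn, Nat.cast_zero, add_zero] at h0 hn
  rw [hn, hp, h0]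

theorem IsShift.of_hasPeriod {n : ℕ} (hn : 1 ≤ n) (hp : HasPeriod w n) (hp' : HasPeriod w' n)
    {s : ℤ} (hs : ∀ k < n, w' k = w (s + k)) : IsShift w' w := by
  refine ⟨s, fun j => ?_⟩
  obtain ⟨k, hk⟩ := Int.eq_ofNat_of_zero_le (Int.emod_nonneg j (by omega : (n : ℤ) ≠ 0))
  have hkn : k < n := by have := Int.emod_lt_of_pos j (by omega : (0 : ℤ) < n); omega
  calc w' j = w' (j % n) := by simpa using (hp'.emod_add j 0).symm
    _ = w (s + j % n) := by rw [hk, hs k hkn]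
    _ = w (j + s) := by rw [add_comm s, hp.emod_add]

end

theorem minimal_forbidden_words_define_general {A : Type}
    (w : ℤ → A) (n : ℕ) (hn : 1 ≤ n) (hp : HasPeriod w n) :
    Defines {u : List A | MinForbidden w u} w := by
  refine ⟨fun u hu => hu.1, fun w' hw' => ?_⟩
  have hsub : ∀ u, IsFactor w' u → IsFactor w u :=
    fun u => isFactor_of_forall_minForbidden_not_isFactor hw'
  obtain ⟨s, hs⟩ := isFactor_iff_getElem.mp (hsub _ (isFactor_ofFn w' 0 n))
  refine IsShift.of_hasPeriod (s := s) hn hp (hp.of_factors_subset hsub) fun k hk => ?_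
  simpa using hs k (by simpa using hk)

theorem minimal_forbidden_words_define {A : Type} [Fintype A]
    (w : ℤ → A) (n : ℕ) (hn : 1 ≤ n) (hp : HasPeriod w n) :
    Defines {u : List A | MinForbidden w u} w :=
  minimal_forbidden_words_define_general w n hn hp
end

section
/- Let w be a periodic bi-infinite word over a finite alphabet A and let S be a set of finite words over A that defines w and is reduced, i.e. every proper factor of every element of S is a factor of w. Then S is exactly the set of all minimal forbidden words of w. In particular, there is a unique reduced set of forbidden words defining w. -/
/-!
If a minimal forbidden word `u` of `w` were missing from `S`, glue the occurrence of
`u.dropLast` in `w` (extended to the left by `w`) to the occurrence of `u.tail` (extended to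
the right by `w`), overlapping them so that `u` appears in the middle. Every factor of the
glued word either lies inside one of the two halves, hence is a factor of `w` and not in `S`,
or contains `u`; since `S` is reduced, a word of `S` properly containing `u` would make `u` a
factor of `w`. So the glued word avoids `S`, hence is a shift of `w`, and `u` is a factor of
`w` after all.
-/

section Words

variable {A : Type} {w w' : ℤ → A} {u v : List A}

def OccursAt (w : ℤ → A) (u : List A) (i : ℤ) : Prop :=
  ∀ k (hk : k < u.length), u[k] = w (i + k)

theorem isFactor_iff_exists_occursAt : IsFactor w u ↔ ∃ i, OccursAt w u i := by
  simp [IsFactor, OccursAt, List.ext_getElem_iff, ← List.map_eq_flatMap]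

theorem OccursAt.of_agree {i i' : ℤ} (h : OccursAt w u i)
    (hagree : ∀ k < u.length, w (i + k) = w' (i' + k)) : OccursAt w' u i' :=
  fun k hk => (h k hk).trans (hagree k hk)

theorem IsShift.isFactor (hs : IsShift w' w) (hu : IsFactor w' u) : IsFactor w u := by
  obtain ⟨t, ht⟩ := hs
  obtain ⟨i, hi⟩ := isFactor_iff_exists_occursAt.mp hu
  exact isFactor_iff_exists_occursAt.mpr
    ⟨i + t, hi.of_agree fun k _ => by rw [ht]; ring_nf⟩

theorem OccursAt.isInfix {p l : ℤ} (hu : OccursAt w u p) (hv : OccursAt w v l)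
    (hlp : l ≤ p) (hend : p + u.length ≤ l + v.length) : u <:+: v := by
  refine List.infix_iff_getElem?.mpr ⟨(p - l).toNat, by omega, fun k hk => ?_⟩
  rw [List.getElem?_eq_getElem (by omega), hu k hk, hv _ (by omega)]
  congr 2
  omega

theorem isFactor_nil (w : ℤ → A) : IsFactor w [] := ⟨0, rfl⟩

theorem MinForbidden.ne_nil (h : MinForbidden w u) : u ≠ [] := by
  rintro rfl
  exact h.1 (isFactor_nil w)

theorem MinForbidden.isFactor_dropLast (h : MinForbidden w u) : IsFactor w u.dropLast :=
  h.2 _ u.dropLast_prefix.isInfix <| ne_of_apply_ne List.length <| by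
    have := List.length_pos_iff.mpr h.ne_nil
    simp only [List.length_dropLast]
    omega

theorem MinForbidden.isFactor_tail (h : MinForbidden w u) : IsFactor w u.tail :=
  h.2 _ u.tail_suffix.isInfix <| ne_of_apply_ne List.length <| by
    have := List.length_pos_iff.mpr h.ne_nil
    simp only [List.length_tail]
    omega

def glue (w : ℤ → A) (i j : ℤ) (a : A) : ℤ → A :=
  fun m => if m < 0 then w (i + m) else if m = 0 then a else w (j - 1 + m)

section Glue

variable {i j m : ℤ} {a : A}

theorem glue_of_neg (hm : m < 0) : glue w i j a m = w (i + m) := if_pos hm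

theorem glue_zero : glue w i j a 0 = a := rfl

theorem glue_of_pos (hm : 0 < m) : glue w i j a m = w (j - 1 + m) := by
  simp [glue, hm.not_gt, hm.ne']

theorem occursAt_glue (hu : u ≠ []) (hsuf : OccursAt w u.tail j) :
    OccursAt (glue w i j (u.head hu)) u 0 := by
  rintro (_ | k) hk
  · simp [glue_zero, List.head_eq_getElem]
  · have hk' : k < u.tail.length := by simp only [List.length_tail]; omega
    rw [glue_of_pos (by omega), ← List.getElem_tail hk', hsuf k hk']
    congr 1
    push_cast
    ring

theorem glue_eq_of_add_two_le (hu : u ≠ []) (hpre : OccursAt w u.dropLast i)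
    (hsuf : OccursAt w u.tail j) (hm : m + 2 ≤ u.length) :
    glue w i j (u.head hu) m = w (i + m) := by
  rcases lt_or_ge m 0 with hneg | hnonneg
  · exact glue_of_neg hneg
  · lift m to ℕ using hnonneg
    have hglue := occursAt_glue (i := i) hu hsuf m (by omega)
    rw [zero_add] at hglue
    have hm' : m < u.dropLast.length := by simp only [List.length_dropLast]; omega
    rw [← hglue, ← hpre m hm', List.getElem_dropLast]

theorem exists_word_isFactor_and_isFactor_or_isInfix (hu : u ≠ [])
    (hpre : IsFactor w u.dropLast) (hsuf : IsFactor w u.tail) :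
    ∃ w' : ℤ → A, IsFactor w' u ∧ ∀ v, IsFactor w' v → IsFactor w v ∨ u <:+: v := by
  obtain ⟨i, hi⟩ := isFactor_iff_exists_occursAt.mp hpre
  obtain ⟨j, hj⟩ := isFactor_iff_exists_occursAt.mp hsuf
  have hu0 := occursAt_glue (i := i) hu hj
  refine ⟨glue w i j (u.head hu), isFactor_iff_exists_occursAt.mpr ⟨0, hu0⟩, fun v hv => ?_⟩
  obtain ⟨l, hl⟩ := isFactor_iff_exists_occursAt.mp hv
  by_cases hleft : l + v.length + 1 ≤ u.length
  · refine .inl <| isFactor_iff_exists_occursAt.mpr ⟨i + l, hl.of_agree fun k hk => ?_⟩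
    rw [glue_eq_of_add_two_le hu hi hj (by omega), add_assoc]
  by_cases hright : 0 < l
  · refine .inl <| isFactor_iff_exists_occursAt.mpr ⟨j - 1 + l, hl.of_agree fun k hk => ?_⟩
    rw [glue_of_pos (by omega), add_assoc]
  exact .inr (hu0.isInfix hl (by omega) (by omega))

end Glue

end Words

theorem reduced_defining_set_unique_general {A : Type}
    (w : ℤ → A)
    (S : Set (List A)) (hdef : Defines S w)
    (hred : ∀ u ∈ S, ∀ v : List A, v <:+: u → v ≠ u → IsFactor w v) :
    S = {u : List A | MinForbidden w u} := by
  ext u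
  refine ⟨fun hu => ⟨hdef.1 u hu, hred u hu⟩, fun hmf => ?_⟩
  by_contra huS
  obtain ⟨w', hw'u, hw'⟩ := exists_word_isFactor_and_isFactor_or_isInfix hmf.ne_nil
    hmf.isFactor_dropLast hmf.isFactor_tail
  have havoid : ∀ v ∈ S, ¬ IsFactor w' v := by
    intro v hvS hv
    rcases hw' v hv with hvw | huv
    · exact hdef.1 v hvS hvw
    · exact hmf.1 (hred v hvS u huv (by rintro rfl; exact huS hvS))
  exact hmf.1 ((hdef.2 w' havoid).isFactor hw'u)

theorem reduced_defining_set_unique {A : Type} [Fintype A]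
    (w : ℤ → A) (n : ℕ) (hn : 1 ≤ n) (hp : HasPeriod w n)
    (S : Set (List A)) (hdef : Defines S w)
    (hred : ∀ u ∈ S, ∀ v : List A, v <:+: u → v ≠ u → IsFactor w v) :
    S = {u : List A | MinForbidden w u} :=
  reduced_defining_set_unique_general w S hdef hred
end

section
/- Let w be a bi-infinite word over the two-letter alphabet A = {a, b} with least period n ≥ 2. Then the total number of minimal forbidden words of w equals 1 plus the total number of bispecial factors of w (of all lengths, including the empty word; both totals are finite). -/
/-- Over the binary alphabet `Bool` (letters `true = a`, `false = b`):
`u` is a left-special factor of `w`. -/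
def LeftSpecial (w : ℤ → Bool) (u : List Bool) : Prop :=
  IsFactor w (true :: u) ∧ IsFactor w (false :: u)

/-- `u` is a right-special factor of `w`. -/
def RightSpecial (w : ℤ → Bool) (u : List Bool) : Prop :=
  IsFactor w (u ++ [true]) ∧ IsFactor w (u ++ [false])

/-- `u` is a bispecial factor of `w`. -/
def Bispecial (w : ℤ → Bool) (u : List Bool) : Prop :=
  LeftSpecial w u ∧ RightSpecial w u

/-!
Write `p m`, `r m`, `b m` and `f m` for the numbers of factors, right special factors,
bispecial factors and minimal forbidden words of length `m`. Over a binary alphabet every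
factor has one or two extensions on each side, so `p (m + 1) = p m + r m`, and left special
factors of length `m` are just as many. A word `a v b` is a factor or a minimal forbidden word
exactly when `a v` and `v b` are factors; counting these words by their middle `v` gives
`f (m + 2) + p (m + 2) = p m + 2 r m + b m`, that is `f (m + 2) + r (m + 1) = b m + r m`.
Summing over `m` telescopes, with `f 0 = 0` and `f 1 + r 0 = 1` (as `f 1 + p 1 = 2`). A word
of period `n` has at most `n` factors of each length, and since suffixes of right special
factors are right special, this forces `r m = 0` for `m ≥ n`.
-/

lemma List.IsInfix.infix_tail_or_infix_dropLast {A : Type} {x l : List A} (h : x <:+: l)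
    (hne : x ≠ l) : x <:+: l.tail ∨ x <:+: l.dropLast := by
  obtain ⟨s, t, rfl⟩ := h
  rcases s with _ | ⟨c, s⟩
  · rcases t.eq_nil_or_concat' with rfl | ⟨t, d, rfl⟩
    · simp at hne
    · right
      exact ⟨[], t, by simp [← List.append_assoc]⟩
  · left
    exact ⟨s, t, rfl⟩

namespace Word

section Factors

variable {A : Type} (w : ℤ → A)

def window (i : ℤ) (m : ℕ) : List A := (List.range m).map fun j : ℕ => w (i + j)

@[simp] lemma length_window (i : ℤ) (m : ℕ) : (window w i m).length = m := by simp [window]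

lemma window_add (i : ℤ) (p q : ℕ) :
    window w i (p + q) = window w i p ++ window w (i + p) q := by
  simp only [window, List.range_add, List.map_append, List.map_map, Function.comp_def]
  push_cast
  simp only [add_assoc]

lemma window_succ (i : ℤ) (m : ℕ) : window w i (m + 1) = window w i m ++ [w (i + m)] := by
  rw [window_add]
  simp [window]

lemma window_succ' (i : ℤ) (m : ℕ) : window w i (m + 1) = w i :: window w (i + 1) m := by
  rw [add_comm m, window_add]
  simp [window]

lemma isFactor_iff_window {u : List A} : IsFactor w u ↔ ∃ i, u = window w i u.length := by
  simp [IsFactor, window, ← List.map_eq_flatMap, Function.comp_def]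

lemma isFactor_iff_window_of_length {u : List A} {m : ℕ} (hu : u.length = m) :
    IsFactor w u ↔ ∃ i, u = window w i m := by
  rw [isFactor_iff_window, hu]

lemma isFactor_window (i : ℤ) (m : ℕ) : IsFactor w (window w i m) :=
  (isFactor_iff_window_of_length w (length_window w i m)).2 ⟨i, rfl⟩

lemma isFactor_nil : IsFactor w ([] : List A) := isFactor_window w 0 0

variable {w}

lemma _root_.IsFactor.of_infix_s11 {u v : List A} (hu : IsFactor w u) (hvu : v <:+: u) :
    IsFactor w v := by
  obtain ⟨s, t, rfl⟩ := hvu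
  obtain ⟨i, hi⟩ := (isFactor_iff_window w).1 hu
  simp only [List.length_append, window_add, List.append_assoc] at hi
  obtain ⟨-, hi⟩ := List.append_inj hi (by simp)
  obtain ⟨hv, -⟩ := List.append_inj hi (by simp)
  exact hv ▸ isFactor_window w _ _

lemma _root_.IsFactor.exists_append_singleton {u : List A} (hu : IsFactor w u) :
    ∃ a, IsFactor w (u ++ [a]) := by
  obtain ⟨i, hi⟩ := (isFactor_iff_window w).1 hu
  generalize u.length = m at hi
  subst hi
  exact ⟨_, window_succ w i _ ▸ isFactor_window w _ _⟩

lemma _root_.IsFactor.exists_cons {u : List A} (hu : IsFactor w u) :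
    ∃ a, IsFactor w (a :: u) := by
  obtain ⟨i, hi⟩ := (isFactor_iff_window w).1 hu
  generalize u.length = m at hi
  subst hi
  refine ⟨w (i - 1), ?_⟩
  simpa [window_succ'] using isFactor_window w (i - 1) (m + 1)

end Factors

section MinimalForbidden

variable {A : Type} {w : ℤ → A}

lemma not_minForbidden_nil : ¬ MinForbidden w [] := fun h => h.1 (isFactor_nil w)

lemma disjoint_minForbidden_isFactor :
    Disjoint {u : List A | MinForbidden w u} {u | IsFactor w u} :=
  Set.disjoint_left.2 fun _ hu => hu.1

lemma minForbidden_or_isFactor_singleton (a : A) : MinForbidden w [a] ∨ IsFactor w [a] := by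
  refine or_iff_not_imp_right.2 fun ha => ⟨ha, fun x hx hne => ?_⟩
  have hx : x <:+: [] := by simpa using hx.infix_tail_or_infix_dropLast hne
  rw [List.infix_nil.1 hx]
  exact isFactor_nil w

lemma minForbidden_or_isFactor_cons_append_iff {a b : A} {v : List A} :
    MinForbidden w (a :: (v ++ [b])) ∨ IsFactor w (a :: (v ++ [b])) ↔
      IsFactor w (a :: v) ∧ IsFactor w (v ++ [b]) := by
  have hpre : a :: v <:+: a :: (v ++ [b]) := ⟨[], [b], by simp⟩
  have hsuf : v ++ [b] <:+: a :: (v ++ [b]) := ⟨[a], [], by simp⟩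
  constructor
  · rintro (⟨-, hmin⟩ | hu)
    · exact ⟨hmin _ hpre (by simp), hmin _ hsuf (by simp)⟩
    · exact ⟨hu.of_infix_s11 hpre, hu.of_infix_s11 hsuf⟩
  · rintro ⟨hL, hR⟩
    refine or_iff_not_imp_right.2 fun hu => ⟨hu, fun x hx hne => ?_⟩
    rcases hx.infix_tail_or_infix_dropLast hne with hx | hx
    · exact hR.of_infix_s11 hx
    · rw [← List.cons_append, List.dropLast_concat] at hx
      exact hL.of_infix_s11 hx

end MinimalForbidden

section Counting

open Finset

variable {A : Type}

noncomputable def wordsOfLength [Finite A] (S : Set (List A)) (m : ℕ) : Finset (List A) :=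
  ((List.finite_length_eq A m).inter_of_right S).toFinset

variable [Finite A] {S : Set (List A)}

@[simp] lemma mem_wordsOfLength {m : ℕ} {u : List A} :
    u ∈ wordsOfLength S m ↔ u ∈ S ∧ u.length = m := by
  simp [wordsOfLength]

lemma filter_wordsOfLength {p : List A → Prop} [DecidablePred p] (h : {u | p u} ⊆ S)
    (m : ℕ) : (wordsOfLength S m).filter p = wordsOfLength {u | p u} m := by
  ext u
  simp only [mem_filter, mem_wordsOfLength, Set.mem_ofPred_eq]
  exact ⟨fun ⟨⟨_, hl⟩, hp⟩ => ⟨hp, hl⟩,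
    fun ⟨hp, hl⟩ => ⟨⟨h hp, hl⟩, hp⟩⟩

lemma card_wordsOfLength_mono {T : Set (List A)} (h : S ⊆ T) (m : ℕ) :
    #(wordsOfLength S m) ≤ #(wordsOfLength T m) :=
  card_le_card fun _ hu => mem_wordsOfLength.2 (And.imp_left (@h _) (mem_wordsOfLength.1 hu))

lemma card_wordsOfLength_union {T : Set (List A)} (hST : Disjoint S T) (m : ℕ) :
    #(wordsOfLength (S ∪ T) m) = #(wordsOfLength S m) + #(wordsOfLength T m) := by
  classical
  rw [← card_union_of_disjoint]
  · congr 1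
    ext u
    simp [or_and_right]
  · exact disjoint_left.2 fun u hS hT =>
      hST.ne_of_mem (mem_wordsOfLength.1 hS).1 (mem_wordsOfLength.1 hT).1 rfl

lemma ncard_eq_sum_card_wordsOfLength {N : ℕ} (h : ∀ u ∈ S, u.length < N) :
    S.ncard = ∑ m ∈ range N, #(wordsOfLength S m) := by
  classical
  have hS : S = ↑((range N).biUnion (wordsOfLength S)) := by
    ext u
    simp only [coe_biUnion, coe_range, Set.mem_iUnion, Set.mem_Iio, mem_coe, mem_wordsOfLength]
    exact ⟨fun hu => ⟨u.length, h u hu, hu, rfl⟩, fun ⟨_, _, hu, _⟩ => hu⟩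
  conv_lhs => rw [hS, Set.ncard_coe_finset]
  refine card_biUnion fun m _ m' _ hne => ?_
  exact disjoint_left.2 fun u hu hu' =>
    hne ((mem_wordsOfLength.1 hu).2.symm.trans (mem_wordsOfLength.1 hu').2)

lemma length_lt_of_card_wordsOfLength_eq_zero {N : ℕ}
    (h : ∀ m, N ≤ m → #(wordsOfLength S m) = 0) (u : List A) (hu : u ∈ S) :
    u.length < N := by
  by_contra! hN
  have hmem : u ∈ wordsOfLength S u.length := mem_wordsOfLength.2 ⟨hu, rfl⟩
  rw [card_eq_zero.1 (h _ hN)] at hmem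
  exact notMem_empty u hmem

end Counting

section Extensions

open Finset Classical

variable {A : Type} [Fintype A] (w : ℤ → A)

noncomputable def rightExtensions (u : List A) : Finset A := {a | IsFactor w (u ++ [a])}

noncomputable def leftExtensions (u : List A) : Finset A := {a | IsFactor w (a :: u)}

lemma card_factors_succ_eq_sum_rightExtensions (m : ℕ) :
    #(wordsOfLength {u | IsFactor w u} (m + 1)) =
      ∑ v ∈ wordsOfLength {u | IsFactor w u} m, #(rightExtensions w v) := by
  have hsplit : wordsOfLength {u | IsFactor w u} (m + 1) =
      (wordsOfLength {u | IsFactor w u} m).biUnion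
        fun v => (rightExtensions w v).image fun a => v ++ [a] := by
    ext u
    simp only [mem_wordsOfLength, Set.mem_ofPred_eq, mem_biUnion, mem_image, rightExtensions,
      mem_filter, mem_univ, true_and]
    constructor
    · rintro ⟨hu, hl⟩
      rcases u.eq_nil_or_concat' with rfl | ⟨v, a, rfl⟩
      · simp at hl
      · exact ⟨v, ⟨hu.of_infix_s11 (List.prefix_append v [a]).isInfix, by simpa using hl⟩,
          a, hu, rfl⟩
    · rintro ⟨v, ⟨-, hv⟩, a, ha, rfl⟩
      exact ⟨ha, by simp [hv]⟩
  rw [hsplit, card_biUnion]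
  · exact sum_congr rfl fun v _ => card_image_of_injective _ fun a b h => by simpa using h
  · intro v _ v' _ hne
    simp only [Function.onFun, disjoint_left, mem_image]
    rintro _ ⟨a, -, rfl⟩ ⟨b, -, h⟩
    exact hne (List.append_inj_left' h rfl).symm

lemma card_factors_succ_eq_sum_leftExtensions (m : ℕ) :
    #(wordsOfLength {u | IsFactor w u} (m + 1)) =
      ∑ v ∈ wordsOfLength {u | IsFactor w u} m, #(leftExtensions w v) := by
  have hsplit : wordsOfLength {u | IsFactor w u} (m + 1) =
      (wordsOfLength {u | IsFactor w u} m).biUnion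
        fun v => (leftExtensions w v).image fun a => a :: v := by
    ext u
    simp only [mem_wordsOfLength, Set.mem_ofPred_eq, mem_biUnion, mem_image, leftExtensions,
      mem_filter, mem_univ, true_and]
    constructor
    · rintro ⟨hu, hl⟩
      rcases u with _ | ⟨a, v⟩
      · simp at hl
      · exact ⟨v, ⟨hu.of_infix_s11 (List.suffix_cons a v).isInfix, by simpa using hl⟩,
          a, hu, rfl⟩
    · rintro ⟨v, ⟨-, hv⟩, a, ha, rfl⟩
      exact ⟨ha, by simp [hv]⟩
  rw [hsplit, card_biUnion]
  · exact sum_congr rfl fun v _ => card_image_of_injective _ fun a b h => by simpa using h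
  · intro v _ v' _ hne
    simp only [Function.onFun, disjoint_left, mem_image]
    rintro _ ⟨a, -, rfl⟩ ⟨b, -, h⟩
    exact hne (List.cons_eq_cons.1 h).2.symm

lemma card_minForbidden_add_card_factors_one :
    #(wordsOfLength {u | MinForbidden w u} 1) + #(wordsOfLength {u | IsFactor w u} 1) =
      Fintype.card A := by
  rw [← card_wordsOfLength_union disjoint_minForbidden_isFactor, ← card_univ,
    ← card_image_of_injective univ List.singleton_injective]
  congr 1
  ext u
  simp only [mem_wordsOfLength, Set.mem_union, Set.mem_ofPred_eq, mem_image, mem_univ, true_and]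
  constructor
  · rintro ⟨-, hl⟩
    obtain ⟨a, rfl⟩ := List.length_eq_one_iff.1 hl
    exact ⟨a, rfl⟩
  · rintro ⟨a, rfl⟩
    exact ⟨minForbidden_or_isFactor_singleton a, rfl⟩

lemma card_minForbidden_add_card_factors (m : ℕ) :
    #(wordsOfLength {u | MinForbidden w u} (m + 2)) +
        #(wordsOfLength {u | IsFactor w u} (m + 2)) =
      ∑ v ∈ wordsOfLength {u | IsFactor w u} m,
        #(leftExtensions w v) * #(rightExtensions w v) := by
  have hsplit : wordsOfLength ({u | MinForbidden w u} ∪ {u | IsFactor w u}) (m + 2) =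
      (wordsOfLength {u | IsFactor w u} m).biUnion
        fun v => (leftExtensions w v ×ˢ rightExtensions w v).image
          fun ab => ab.1 :: (v ++ [ab.2]) := by
    ext u
    simp only [mem_wordsOfLength, Set.mem_union, Set.mem_ofPred_eq, mem_biUnion, mem_image,
      mem_product, leftExtensions, rightExtensions, mem_filter, mem_univ, true_and, Prod.exists]
    constructor
    · rintro ⟨hu, hl⟩
      rcases u with _ | ⟨a, u⟩
      · simp at hl
      rcases u.eq_nil_or_concat' with rfl | ⟨v, b, rfl⟩
      · simp at hl
      obtain ⟨hL, hR⟩ := minForbidden_or_isFactor_cons_append_iff.1 hu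
      exact ⟨v, ⟨hR.of_infix_s11 (List.prefix_append v [b]).isInfix, by simpa using hl⟩,
        a, b, ⟨hL, hR⟩, rfl⟩
    · rintro ⟨v, ⟨-, hv⟩, a, b, hab, rfl⟩
      exact ⟨minForbidden_or_isFactor_cons_append_iff.2 hab, by simp [hv]⟩
  rw [← card_wordsOfLength_union disjoint_minForbidden_isFactor, hsplit, card_biUnion]
  · refine sum_congr rfl fun v _ => ?_
    rw [card_image_of_injective _ fun ab ab' h => by simpa [Prod.ext_iff] using h, card_product]
  · intro v _ v' _ hne
    simp only [Function.onFun, disjoint_left, mem_image]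
    rintro _ ⟨ab, -, rfl⟩ ⟨ab', -, h⟩
    exact hne (List.append_inj_left' (List.cons_eq_cons.1 h).2 rfl).symm

end Extensions

section Binary

open Finset Classical

variable (w : ℤ → Bool)

lemma card_rightExtensions {v : List Bool} (hv : IsFactor w v) :
    #(rightExtensions w v) = 1 + if RightSpecial w v then 1 else 0 := by
  obtain ⟨a, ha⟩ := hv.exists_append_singleton
  rw [rightExtensions, card_filter, Fintype.sum_bool, RightSpecial]
  cases a <;> simp [ha, add_comm]

lemma card_leftExtensions {v : List Bool} (hv : IsFactor w v) :
    #(leftExtensions w v) = 1 + if LeftSpecial w v then 1 else 0 := by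
  obtain ⟨a, ha⟩ := hv.exists_cons
  rw [leftExtensions, card_filter, Fintype.sum_bool, LeftSpecial]
  cases a <;> simp [ha, add_comm]

lemma setOf_rightSpecial_subset : {u | RightSpecial w u} ⊆ {u | IsFactor w u} :=
  fun u hu => hu.1.of_infix_s11 (List.prefix_append u [true]).isInfix

lemma setOf_leftSpecial_subset : {u | LeftSpecial w u} ⊆ {u | IsFactor w u} :=
  fun u hu => hu.1.of_infix_s11 (List.suffix_cons true u).isInfix

lemma setOf_bispecial_subset : {u | Bispecial w u} ⊆ {u | RightSpecial w u} :=
  fun _ hu => hu.2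

lemma card_factors_zero : #(wordsOfLength {u | IsFactor w u} 0) = 1 := by
  rw [card_eq_one]
  refine ⟨[], ?_⟩
  ext u
  simp only [mem_wordsOfLength, Set.mem_ofPred_eq, List.length_eq_zero_iff, mem_singleton]
  exact ⟨And.right, fun hu => ⟨hu ▸ isFactor_nil w, hu⟩⟩

lemma card_minForbidden_zero : #(wordsOfLength {u | MinForbidden w u} 0) = 0 := by
  rw [card_eq_zero, eq_empty_iff_forall_notMem]
  intro u hu
  obtain ⟨hu, hl⟩ := mem_wordsOfLength.1 hu
  exact not_minForbidden_nil (List.length_eq_zero_iff.1 hl ▸ hu)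

lemma card_factors_succ_eq_add_rightSpecial (m : ℕ) :
    #(wordsOfLength {u | IsFactor w u} (m + 1)) =
      #(wordsOfLength {u | IsFactor w u} m) + #(wordsOfLength {u | RightSpecial w u} m) := by
  rw [card_factors_succ_eq_sum_rightExtensions,
    ← filter_wordsOfLength (setOf_rightSpecial_subset w), card_filter, card_eq_sum_ones,
    ← sum_add_distrib]
  exact sum_congr rfl fun v hv => card_rightExtensions w (mem_wordsOfLength.1 hv).1

lemma card_factors_succ_eq_add_leftSpecial (m : ℕ) :
    #(wordsOfLength {u | IsFactor w u} (m + 1)) =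
      #(wordsOfLength {u | IsFactor w u} m) + #(wordsOfLength {u | LeftSpecial w u} m) := by
  rw [card_factors_succ_eq_sum_leftExtensions,
    ← filter_wordsOfLength (setOf_leftSpecial_subset w), card_filter, card_eq_sum_ones,
    ← sum_add_distrib]
  exact sum_congr rfl fun v hv => card_leftExtensions w (mem_wordsOfLength.1 hv).1

lemma card_minForbidden_add_card_factors_eq (m : ℕ) :
    #(wordsOfLength {u | MinForbidden w u} (m + 2)) +
        #(wordsOfLength {u | IsFactor w u} (m + 2)) =
      #(wordsOfLength {u | IsFactor w u} m) + #(wordsOfLength {u | LeftSpecial w u} m) +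
        #(wordsOfLength {u | RightSpecial w u} m) + #(wordsOfLength {u | Bispecial w u} m) := by
  rw [card_minForbidden_add_card_factors, ← filter_wordsOfLength (setOf_leftSpecial_subset w),
    ← filter_wordsOfLength (setOf_rightSpecial_subset w),
    ← filter_wordsOfLength ((setOf_bispecial_subset w).trans (setOf_rightSpecial_subset w)),
    card_filter, card_filter, card_filter, card_eq_sum_ones, ← sum_add_distrib,
    ← sum_add_distrib, ← sum_add_distrib]
  refine sum_congr rfl fun v hv => ?_
  have hv := (mem_wordsOfLength.1 hv).1
  rw [card_leftExtensions w hv, card_rightExtensions w hv]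
  by_cases hL : LeftSpecial w v <;> by_cases hR : RightSpecial w v <;> simp [Bispecial, hL, hR]

lemma card_minForbidden_add_card_rightSpecial_succ (m : ℕ) :
    #(wordsOfLength {u | MinForbidden w u} (m + 2)) +
        #(wordsOfLength {u | RightSpecial w u} (m + 1)) =
      #(wordsOfLength {u | Bispecial w u} m) + #(wordsOfLength {u | RightSpecial w u} m) := by
  have h1 := card_factors_succ_eq_add_rightSpecial w (m + 1)
  rw [show m + 1 + 1 = m + 2 by rfl] at h1
  have h2 := card_factors_succ_eq_add_rightSpecial w m
  have h3 := card_factors_succ_eq_add_leftSpecial w m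
  have h4 := card_minForbidden_add_card_factors_eq w m
  omega

lemma card_minForbidden_one_add_card_rightSpecial_zero :
    #(wordsOfLength {u | MinForbidden w u} 1) + #(wordsOfLength {u | RightSpecial w u} 0) =
      1 := by
  have h1 := card_minForbidden_add_card_factors_one w
  have h2 := card_factors_succ_eq_add_rightSpecial w 0
  rw [Fintype.card_bool] at h1
  rw [zero_add, card_factors_zero] at h2
  omega

lemma sum_card_minForbidden_add_card_rightSpecial (N : ℕ) :
    ∑ m ∈ range (N + 2), #(wordsOfLength {u | MinForbidden w u} m) +
        #(wordsOfLength {u | RightSpecial w u} N) =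
      1 + ∑ m ∈ range N, #(wordsOfLength {u | Bispecial w u} m) := by
  induction N with
  | zero =>
    simp [sum_range_succ, card_minForbidden_zero, card_minForbidden_one_add_card_rightSpecial_zero]
  | succ N ih =>
    rw [sum_range_succ _ (N + 2), sum_range_succ _ N]
    have h := card_minForbidden_add_card_rightSpecial_succ w N
    omega

lemma card_factors_eq_one_add_sum_card_rightSpecial (m : ℕ) :
    #(wordsOfLength {u | IsFactor w u} m) =
      1 + ∑ k ∈ range m, #(wordsOfLength {u | RightSpecial w u} k) := by
  induction m with
  | zero => simp [card_factors_zero]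
  | succ m ih => rw [card_factors_succ_eq_add_rightSpecial, ih, sum_range_succ, add_assoc]

variable {w}

lemma _root_.RightSpecial.drop {u : List Bool} (hu : RightSpecial w u) (k : ℕ) :
    RightSpecial w (u.drop k) := by
  have hsuf (a : Bool) : u.drop k ++ [a] <:+ u ++ [a] :=
    ⟨u.take k, by rw [← List.append_assoc, List.take_append_drop]⟩
  exact ⟨hu.1.of_infix_s11 (hsuf true).isInfix, hu.2.of_infix_s11 (hsuf false).isInfix⟩

lemma card_rightSpecial_pos_of_le {k m : ℕ} (hkm : k ≤ m)
    (hm : 0 < #(wordsOfLength {u | RightSpecial w u} m)) :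
    0 < #(wordsOfLength {u | RightSpecial w u} k) := by
  obtain ⟨u, hu⟩ := card_pos.1 hm
  obtain ⟨hu, hl⟩ := mem_wordsOfLength.1 hu
  exact card_pos.2 ⟨u.drop (m - k), mem_wordsOfLength.2 ⟨hu.drop _, by simp [hl]; omega⟩⟩

end Binary

section Periodic

open Finset

lemma window_emod {A : Type} {w : ℤ → A} {n : ℕ} (hp : HasPeriod w n) (i : ℤ) (m : ℕ) :
    window w (i % n) m = window w i m := by
  refine List.map_congr_left fun j _ => ?_
  have := (show Function.Periodic w n from hp).sub_int_mul_eq (x := i + j) (i / n)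
  rw [Int.cast_id] at this
  rw [Int.emod_def, ← this]
  ring_nf

lemma card_factors_le_of_hasPeriod {A : Type} [Finite A] {w : ℤ → A} {n : ℕ} (hn : 0 < n)
    (hp : HasPeriod w n) (m : ℕ) : #(wordsOfLength {u | IsFactor w u} m) ≤ n := by
  classical
  have hsub : wordsOfLength {u | IsFactor w u} m ⊆ (Ico (0 : ℤ) n).image (window w · m) := by
    intro u hu
    obtain ⟨hu, hl⟩ := mem_wordsOfLength.1 hu
    obtain ⟨i, rfl⟩ := (isFactor_iff_window_of_length w hl).1 hu
    exact mem_image.2 ⟨i % n, mem_Ico.2 ⟨Int.emod_nonneg _ (by omega),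
      Int.emod_lt_of_pos _ (by omega)⟩, window_emod hp i m⟩
  calc #(wordsOfLength {u | IsFactor w u} m)
      ≤ #(Ico (0 : ℤ) n) := (card_le_card hsub).trans card_image_le
    _ = n := by simp

variable {w : ℤ → Bool} {n : ℕ}

lemma card_rightSpecial_eq_zero_of_hasPeriod (hn : 0 < n) (hp : HasPeriod w n) {m : ℕ}
    (hm : n ≤ m) : #(wordsOfLength {u | RightSpecial w u} m) = 0 := by
  by_contra! h
  have hsum := card_nsmul_le_sum (range (m + 1))
    (fun k => #(wordsOfLength {u | RightSpecial w u} k)) 1 fun k hk =>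
      card_rightSpecial_pos_of_le (Nat.lt_succ_iff.1 (mem_range.1 hk)) (Nat.pos_of_ne_zero h)
  rw [card_range, smul_eq_mul, mul_one] at hsum
  have := card_factors_eq_one_add_sum_card_rightSpecial w (m + 1)
  have := card_factors_le_of_hasPeriod hn hp (m + 1)
  omega

lemma card_bispecial_eq_zero_of_hasPeriod (hn : 0 < n) (hp : HasPeriod w n) {m : ℕ}
    (hm : n ≤ m) : #(wordsOfLength {u | Bispecial w u} m) = 0 :=
  Nat.eq_zero_of_le_zero <| (card_wordsOfLength_mono (setOf_bispecial_subset w) m).trans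
    (card_rightSpecial_eq_zero_of_hasPeriod hn hp hm).le

lemma card_minForbidden_eq_zero_of_hasPeriod (hn : 0 < n) (hp : HasPeriod w n) {m : ℕ}
    (hm : n + 2 ≤ m) : #(wordsOfLength {u | MinForbidden w u} m) = 0 := by
  obtain ⟨k, rfl⟩ : ∃ k, m = k + 2 := ⟨m - 2, by omega⟩
  have := card_minForbidden_add_card_rightSpecial_succ w k
  rw [card_bispecial_eq_zero_of_hasPeriod hn hp (by omega),
    card_rightSpecial_eq_zero_of_hasPeriod hn hp (by omega : n ≤ k)] at this
  omega

end Periodic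

end Word

theorem minimal_forbidden_count_eq_bispecial_succ_general (w : ℤ → Bool)
    (n : ℕ) (hlp : IsLeastPeriod w n) :
    ({u : List Bool | MinForbidden w u}).Finite ∧
    ({u : List Bool | Bispecial w u}).Finite ∧
    ({u : List Bool | MinForbidden w u}).ncard =
      1 + ({u : List Bool | Bispecial w u}).ncard := by
  open Word Finset in
  obtain ⟨hn, hp, -⟩ := hlp
  have hMF := length_lt_of_card_wordsOfLength_eq_zero fun _ =>
    card_minForbidden_eq_zero_of_hasPeriod (w := w) hn hp
  have hBS := length_lt_of_card_wordsOfLength_eq_zero fun _ =>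
    card_bispecial_eq_zero_of_hasPeriod (w := w) hn hp
  refine ⟨(List.finite_length_lt Bool _).subset hMF, (List.finite_length_lt Bool _).subset hBS,
    ?_⟩
  rw [ncard_eq_sum_card_wordsOfLength hMF, ncard_eq_sum_card_wordsOfLength hBS,
    ← sum_card_minForbidden_add_card_rightSpecial,
    card_rightSpecial_eq_zero_of_hasPeriod hn hp le_rfl, add_zero]

theorem minimal_forbidden_count_eq_bispecial_succ (w : ℤ → Bool)
    (n : ℕ) (hn : 2 ≤ n) (hlp : IsLeastPeriod w n) :
    ({u : List Bool | MinForbidden w u}).Finite ∧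
    ({u : List Bool | Bispecial w u}).Finite ∧
    ({u : List Bool | MinForbidden w u}).ncard =
      1 + ({u : List Bool | Bispecial w u}).ncard :=
  minimal_forbidden_count_eq_bispecial_succ_general w n hlp
end

section
/- Let w be a bi-infinite word over the two-letter alphabet A = {a, b} with least period n ≥ 2. Then n = 2 + Σ_{k ≥ 1} LS(k), where LS(k) is the number of left-special factors of w of length k (the sum is finite since LS(k) = 0 for k ≥ n). -/
/-! Write `p(k)` for the number of factors of length `k`. Every factor extends to the left, in two
ways exactly when it is left special, so `p(k+1) = p(k) + LS(k)` for any binary word. For least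
period `n ≥ 2` both letters occur, so `p(1) = 2`, while for `k ≥ n` the windows of length `k`
starting at `0, …, n - 1` are pairwise distinct (two equal ones would give a smaller period), so
`p(k) = n`. Telescoping from `1` to `n` gives the formula, and `LS(k) = p(k+1) - p(k) = 0` for
`k ≥ n`. -/

namespace BiinfiniteWord

variable {A : Type} {w : ℤ → A} {n k : ℕ}

def window (w : ℤ → A) (i : ℤ) (k : ℕ) : List A :=
  List.ofFn fun j : Fin k => w (i + j)

@[simp]
lemma length_window (w : ℤ → A) (i : ℤ) (k : ℕ) : (window w i k).length = k :=
  List.length_ofFn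

lemma window_succ (w : ℤ → A) (i : ℤ) (k : ℕ) :
    window w i (k + 1) = w i :: window w (i + 1) k := by
  simp only [window, List.ofFn_succ, Fin.val_zero, Fin.val_succ]
  congr 2
  · simp
  · funext j; push_cast; ring_nf

lemma map_range_eq_window (w : ℤ → A) (i : ℤ) (k : ℕ) :
    ((List.range k).map fun j => w (i + j)) = window w i k := by
  refine List.ext_getElem (by simp [window]) fun j _ _ => ?_
  simp [window, ← List.map_eq_flatMap]

lemma isFactor_iff_exists_window {u : List A} : IsFactor w u ↔ ∃ i, window w i u.length = u := by
  simp only [IsFactor, map_range_eq_window, eq_comm]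

lemma isFactor_singleton_iff {c : A} : IsFactor w [c] ↔ ∃ i, w i = c := by
  simp [isFactor_iff_exists_window, window]

lemma isFactor_window (w : ℤ → A) (i : ℤ) (k : ℕ) : IsFactor w (window w i k) :=
  isFactor_iff_exists_window.2 ⟨i, by rw [length_window]⟩

lemma isFactor_of_isFactor_cons {c : A} {v : List A} (h : IsFactor w (c :: v)) : IsFactor w v := by
  obtain ⟨i, hi⟩ := isFactor_iff_exists_window.1 h
  rw [List.length_cons, window_succ, List.cons.injEq] at hi
  rw [← hi.2]
  exact isFactor_window w _ _

lemma exists_isFactor_cons {v : List A} (h : IsFactor w v) : ∃ c, IsFactor w (c :: v) := by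
  obtain ⟨i, hi⟩ := isFactor_iff_exists_window.1 h
  refine ⟨w (i - 1), ?_⟩
  simpa [window_succ, hi] using isFactor_window w (i - 1) (v.length + 1)

def factorsOfLength (w : ℤ → A) (k : ℕ) : Set (List A) :=
  {u | u.length = k ∧ IsFactor w u}

lemma window_emod_of_hasPeriod (h : HasPeriod w n) (i : ℤ) (k : ℕ) :
    window w (i % n) k = window w i k := by
  simp only [window, Int.emod_def, sub_add_eq_add_sub, mul_comm (n : ℤ)]
  congr 1 with j
  exact Function.Periodic.sub_int_mul_eq h _

lemma factorsOfLength_eq_image_of_hasPeriod (h : HasPeriod w n) (hn : 0 < n) (k : ℕ) :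
    factorsOfLength w k = (fun i : ℕ => window w i k) '' Set.Iio n := by
  ext u
  constructor
  · rintro ⟨rfl, hu⟩
    obtain ⟨i, hi⟩ := isFactor_iff_exists_window.1 hu
    refine ⟨(i % n).toNat, ?_, ?_⟩
    · have := Int.emod_lt_of_pos i (by omega : (0 : ℤ) < n)
      simp only [Set.mem_Iio]
      omega
    · simp only [Int.toNat_of_nonneg (Int.emod_nonneg i (by omega : (n : ℤ) ≠ 0)),
        window_emod_of_hasPeriod h, hi]
  · rintro ⟨i, -, rfl⟩
    exact ⟨length_window w _ _, isFactor_window w _ _⟩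

lemma hasPeriod_sub_of_window_eq (h : HasPeriod w n) (hn : 0 < n) (hk : n ≤ k) {i j : ℕ}
    (hij : i ≤ j) (heq : window w i k = window w j k) : HasPeriod w (j - i) := by
  intro x
  have hper : Function.Periodic w ((x - i) / n * n) := Function.Periodic.int_mul h _
  set r := (x - i) % n
  have hr : 0 ≤ r ∧ r < n := ⟨Int.emod_nonneg _ (by omega), Int.emod_lt_of_pos _ (by omega)⟩
  have hx : x = i + r + (x - i) / n * n := by
    have := Int.emod_def (x - i) n
    linarith
  have hwin : w (i + r) = w (j + r) := by
    have := congrFun (List.ofFn_inj.1 heq) ⟨r.toNat, by omega⟩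
    simpa [Int.toNat_of_nonneg hr.1] using this
  calc w (x + ↑(j - i)) = w (j + r + (x - i) / n * n) := by congr 1; push_cast [hij]; linarith
    _ = w x := by rw [hper, ← hwin, ← hper, ← hx]

lemma injOn_window_of_isLeastPeriod (hlp : IsLeastPeriod w n) (hk : n ≤ k) :
    Set.InjOn (fun i : ℕ => window w i k) (Set.Iio n) := by
  have key : ∀ i j : ℕ, i ≤ j → j < n → window w i k = window w j k → i = j := by
    intro i j hij hj heq
    by_contra hne
    have := hlp.2.2 (j - i) (by omega) (hasPeriod_sub_of_window_eq hlp.2.1 hlp.1 hk hij heq)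
    omega
  intro i hi j hj heq
  rcases le_total i j with hij | hji
  · exact key i j hij hj heq
  · exact (key j i hji hi heq.symm).symm

lemma ncard_factorsOfLength_of_isLeastPeriod (hlp : IsLeastPeriod w n) (hk : n ≤ k) :
    (factorsOfLength w k).ncard = n := by
  rw [factorsOfLength_eq_image_of_hasPeriod hlp.2.1 hlp.1,
    (injOn_window_of_isLeastPeriod hlp hk).ncard_image]
  simp

lemma ncard_factorsOfLength_succ (w : ℤ → Bool) (k : ℕ) :
    (factorsOfLength w (k + 1)).ncard =
      (factorsOfLength w k).ncard + {u : List Bool | u.length = k ∧ LeftSpecial w u}.ncard := by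
  set E : Bool → Set (List Bool) := fun c => {v | v.length = k ∧ IsFactor w (c :: v)}
  have hfin : ∀ c, (E c).Finite := fun c => (List.finite_length_eq Bool k).subset fun _ hv => hv.1
  have hsplit :
      factorsOfLength w (k + 1) = List.cons true '' E true ∪ List.cons false '' E false := by
    ext (_ | ⟨c, v⟩)
    · simp [factorsOfLength]
    · cases c <;> simp [factorsOfLength, E]
  have hdisj : Disjoint (List.cons true '' E true) (List.cons false '' E false) := by
    simp [Set.disjoint_left]
  have hunion : E true ∪ E false = factorsOfLength w k := by
    ext v
    refine ⟨?_, fun ⟨hv, hf⟩ => ?_⟩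
    · rintro (⟨hv, hf⟩ | ⟨hv, hf⟩) <;> exact ⟨hv, isFactor_of_isFactor_cons hf⟩
    · obtain ⟨c, hc⟩ := exists_isFactor_cons hf
      cases c
      exacts [Or.inr ⟨hv, hc⟩, Or.inl ⟨hv, hc⟩]
  have hinter : E true ∩ E false = {u | u.length = k ∧ LeftSpecial w u} := by
    ext v
    exact ⟨fun ⟨⟨hv, ht⟩, _, hf⟩ => ⟨hv, ht, hf⟩, fun ⟨hv, ht, hf⟩ => ⟨⟨hv, ht⟩, hv, hf⟩⟩
  rw [hsplit, Set.ncard_union_eq hdisj ((hfin _).image _) ((hfin _).image _),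
    Set.ncard_image_of_injective _ List.cons_injective,
    Set.ncard_image_of_injective _ List.cons_injective, ← hunion, ← hinter,
    Set.ncard_union_add_ncard_inter _ _ (hfin _) (hfin _)]

lemma hasPeriod_one_of_forall_ne {w : ℤ → Bool} {c : Bool} (h : ∀ i, w i ≠ c) : HasPeriod w 1 := by
  intro i
  have h₁ := h i
  have h₂ := h (i + (1 : ℕ))
  cases c <;> simp_all

lemma ncard_factorsOfLength_one_of_isLeastPeriod {w : ℤ → Bool} (hlp : IsLeastPeriod w n)
    (hn : 2 ≤ n) : (factorsOfLength w 1).ncard = 2 := by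
  have hocc : ∀ c, IsFactor w [c] := by
    intro c
    by_contra hc
    have hconst : ∀ i, w i ≠ c := by simpa [isFactor_singleton_iff] using hc
    have := hlp.2.2 1 le_rfl (hasPeriod_one_of_forall_ne hconst)
    omega
  have : factorsOfLength w 1 = {[true], [false]} := by
    ext u
    constructor
    · rintro ⟨hu, -⟩
      obtain ⟨c, rfl⟩ := List.length_eq_one_iff.1 hu
      cases c <;> simp
    · rintro (rfl | rfl | -) <;> exact ⟨rfl, hocc _⟩
  rw [this, Set.ncard_pair (by simp)]

end BiinfiniteWord

lemma eq_add_sum_Ico_of_succ_eq_add {p L : ℕ → ℕ} (h : ∀ k, p (k + 1) = p k + L k) {a b : ℕ}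
    (hab : a ≤ b) : p b = p a + ∑ k ∈ Finset.Ico a b, L k := by
  induction b, hab using Nat.le_induction with
  | base => simp
  | succ b hab ih => rw [Finset.sum_Ico_succ_top hab, h, ih, add_assoc]

open BiinfiniteWord

theorem period_eq_two_add_left_special_sum (w : ℤ → Bool)
    (n : ℕ) (hn : 2 ≤ n) (hlp : IsLeastPeriod w n) :
    (∀ k : ℕ, n ≤ k → ({u : List Bool | u.length = k ∧ LeftSpecial w u}).ncard = 0) ∧
    n = 2 + ∑ k ∈ Finset.Ico 1 n,
      ({u : List Bool | u.length = k ∧ LeftSpecial w u}).ncard := by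
  have hsucc := ncard_factorsOfLength_succ w
  have hlarge : ∀ k, n ≤ k → (factorsOfLength w k).ncard = n :=
    fun k hk => ncard_factorsOfLength_of_isLeastPeriod hlp hk
  refine ⟨fun k hk => ?_, ?_⟩
  · have := hsucc k
    rw [hlarge k hk, hlarge (k + 1) (by omega)] at this
    omega
  · have := eq_add_sum_Ico_of_succ_eq_add (p := fun k => (factorsOfLength w k).ncard) hsucc
      (by omega : 1 ≤ n)
    rwa [hlarge n le_rfl, ncard_factorsOfLength_one_of_isLeastPeriod hlp hn] at this
end

section
/- For every c ≥ 1 there exist a bi-infinite word w over the two-letter alphabet A = {a, b} with least period exactly φ_c (the c-th Fibonacci number in the convention φ_1 = 1, φ_2 = 2) and a set S of c finite words over A that defines w. Hence the bound n ≤ φ_c of the main theorem is attained for every c. -/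
/-!
Write `a = false`, `b = true` and let `σ` be the Fibonacci substitution `a ↦ ab`, `b ↦ a`.
A bi-infinite word avoids `bb` iff it is a shift of some `σ(y)`, and `σ(x)` contains `σ(u)a`
iff `x` contains `u`. Hence if `S` defines `x`, then `{bb} ∪ {σ(u)a | u ∈ S}` defines `σ(x)`.
Starting from `a^ℤ`, which `{b}` defines, and iterating: if `x` has period `p` with `q` letters
`a` per period, then `σ(x)` has period `p + q` with `p` letters `a` per period. So after `n`
steps the period is `fib (n + 2)` with `fib (n + 1)` letters `a`, and since consecutive
Fibonacci numbers are coprime, no proper divisor of `fib (n + 2)` is a period.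
-/

section Words

variable {α : Type}

def window (w : ℤ → α) (i : ℤ) (n : ℕ) : List α :=
  (List.range n).map fun j : ℕ => w (i + j)

@[simp]
theorem length_window (w : ℤ → α) (i : ℤ) (n : ℕ) : (window w i n).length = n := by
  simp [window]

theorem window_succ (w : ℤ → α) (i : ℤ) (n : ℕ) :
    window w i (n + 1) = w i :: window w (i + 1) n := by
  simp [window, List.range_succ_eq_map, Function.comp_def, add_assoc, add_comm (1 : ℤ)]

theorem window_add (w : ℤ → α) (i : ℤ) (m n : ℕ) :
    window w i (m + n) = window w i m ++ window w (i + m) n := by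
  simp [window, List.range_add, Function.comp_def, add_assoc]

theorem isFactor_iff_window {w : ℤ → α} {u : List α} :
    IsFactor w u ↔ ∃ i, window w i u.length = u := by
  simp [IsFactor, window, eq_comm, ← List.map_eq_flatMap, Function.comp_def]

theorem isFactor_pair {w : ℤ → α} {a b : α} :
    IsFactor w [a, b] ↔ ∃ i, w i = a ∧ w (i + 1) = b := by
  simp [isFactor_iff_window, window, List.range_succ, eq_comm]

theorem window_of_isShift {z w : ℤ → α} {t : ℤ} (h : ∀ i, z i = w (i + t)) (i : ℤ) (n : ℕ) :
    window z i n = window w (i + t) n := by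
  simp [window, h, add_right_comm]

theorem IsFactor.of_isShift {z w : ℤ → α} {u : List α} (hs : IsShift z w) (h : IsFactor w u) :
    IsFactor z u := by
  obtain ⟨t, ht⟩ := hs
  obtain ⟨i, hi⟩ := isFactor_iff_window.1 h
  exact isFactor_iff_window.2 ⟨i - t, by rwa [window_of_isShift ht, sub_add_cancel]⟩

theorem IsShift.trans {w₁ w₂ w₃ : ℤ → α} (h₁₂ : IsShift w₁ w₂) (h₂₃ : IsShift w₂ w₃) :
    IsShift w₁ w₃ := by
  obtain ⟨s, hs⟩ := h₁₂
  obtain ⟨t, ht⟩ := h₂₃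
  exact ⟨s + t, fun i => by rw [hs, ht, add_assoc]⟩

theorem HasPeriod.gcd {w : ℤ → α} {m n : ℕ} (hm : HasPeriod w m) (hn : HasPeriod w n) :
    HasPeriod w (m.gcd n) := by
  have hm' : Function.Periodic w m := hm
  have hn' : Function.Periodic w n := hn
  show Function.Periodic w _
  rw [Nat.gcd_eq_gcd_ab, mul_comm (m : ℤ), mul_comm (n : ℤ)]
  exact (hm'.int_mul _).add_period (hn'.int_mul _)

theorem count_window_mul_of_hasPeriod [DecidableEq α] {w : ℤ → α} {d : ℕ} (hd : HasPeriod w d)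
    (a : α) (k : ℕ) :
    (window w 0 (k * d)).count a = k * (window w 0 d).count a := by
  induction k with
  | zero => simp [window]
  | succ k ih =>
    have hkd : Function.Periodic w ((k * d : ℕ) : ℤ) := by
      push_cast; exact (show Function.Periodic w d from hd).nat_mul k
    have hshift : window w ((k * d : ℕ) : ℤ) d = window w 0 d := by
      simpa using (window_of_isShift (fun i => (hkd i).symm) 0 d).symm
    rw [add_mul, one_mul, window_add, List.count_append, ih, zero_add, hshift]
    ring

theorem isLeastPeriod_of_coprime_count [DecidableEq α] {w : ℤ → α} {n : ℕ} (a : α)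
    (hn : HasPeriod w n) (hco : ((window w 0 n).count a).Coprime n) : IsLeastPeriod w n := by
  refine ⟨?_, hn, fun m hm hwm => ?_⟩
  · rcases n with _ | n
    · simp [window] at hco
    · omega
  obtain ⟨k, hk⟩ := Nat.gcd_dvd_right m n
  have hcount : (window w 0 n).count a = k * (window w 0 (m.gcd n)).count a := by
    rw [← count_window_mul_of_hasPeriod (hwm.gcd hn), mul_comm, ← hk]
  have hk1 : k = 1 := Nat.dvd_one.1 <| hco ▸ Nat.dvd_gcd ⟨_, hcount⟩ ⟨_, hk.trans (mul_comm _ _)⟩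
  rw [hk1, mul_one] at hk
  exact Nat.le_of_dvd hm (hk ▸ Nat.gcd_dvd_left m n)

end Words

theorem sub_le_sub_apply_of_lt_succ {f : ℤ → ℤ} (hf : ∀ k, f k < f (k + 1)) {j k : ℤ} (hjk : j ≤ k) :
    k - j ≤ f k - f j := by
  induction k, hjk using Int.leInduction with
  | base => simp
  | succ k _ ih => have := hf k; omega

theorem exists_apply_le_lt_apply_succ {f : ℤ → ℤ} (hf : ∀ k, f k < f (k + 1)) (i : ℤ) :
    ∃ k, f k ≤ i ∧ i < f (k + 1) := by
  obtain ⟨k, hk, hmax⟩ := Int.exists_greatest_of_bdd (P := fun k => f k ≤ i)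
    ⟨max 0 (i - f 0), fun k hk => by
      rcases le_total 0 k with h | h
      · have := sub_le_sub_apply_of_lt_succ hf h; omega
      · omega⟩
    ⟨min 0 (i - f 0), by have := sub_le_sub_apply_of_lt_succ hf (min_le_left 0 (i - f 0)); omega⟩
  exact ⟨k, hk, not_le.1 fun h => by have := hmax _ h; omega⟩

theorem exists_int_orbit {α : Type*} {g h : α → α} {s : Set α} (hg : Set.MapsTo g s s)
    (hh : Set.MapsTo h s s) (hgh : ∀ a ∈ s, g (h a) = a) {a₀ : α} (ha₀ : a₀ ∈ s) :
    ∃ e : ℤ → α, (∀ k, e k ∈ s) ∧ ∀ k, e (k + 1) = g (e k) := by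
  refine ⟨fun k => match k with
    | Int.ofNat n => g^[n] a₀
    | Int.negSucc n => h^[n + 1] a₀, fun k => ?_, fun k => ?_⟩
  · rcases k with n | n
    · exact hg.iterate n ha₀
    · exact hh.iterate (n + 1) ha₀
  · rcases k with n | _ | n
    · exact Function.iterate_succ_apply' g n a₀
    · exact (hgh a₀ ha₀).symm
    · rw [show Int.negSucc (n + 1) + 1 = Int.negSucc n by omega]
      dsimp only
      rw [Function.iterate_succ_apply' h (n + 1), hgh _ (hh.iterate (n + 1) ha₀)]

namespace Fibonacci

def block : Bool → List Bool
  | false => [false, true]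
  | true => [false]

/-- `blockStart x k` is the position at which the image of the letter `x k` starts in `subst x`,
normalised by `blockStart x 0 = 0`; `subst x` has an `a` exactly at these positions. -/
noncomputable def blockStart (x : ℤ → Bool) (k : ℤ) : ℤ :=
  ∑ j ∈ Finset.Ico 0 k, ((block (x j)).length : ℤ) -
    ∑ j ∈ Finset.Ico k 0, ((block (x j)).length : ℤ)

open Classical in
noncomputable def subst (x : ℤ → Bool) (i : ℤ) : Bool :=
  decide (i ∉ Set.range (blockStart x))

variable {x y z : ℤ → Bool}

@[simp]
theorem blockStart_zero : blockStart x 0 = 0 := by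
  simp [blockStart]

theorem blockStart_succ (k : ℤ) :
    blockStart x (k + 1) = blockStart x k + (block (x k)).length := by
  rcases le_or_gt 0 k with hk | hk
  · rw [blockStart, blockStart, ← Finset.insert_Ico_right_eq_Ico_add_one hk,
      Finset.sum_insert Finset.right_notMem_Ico, Finset.Ico_eq_empty_of_le hk,
      Finset.Ico_eq_empty_of_le (show (0 : ℤ) ≤ k + 1 by omega)]
    ring
  · rw [blockStart, blockStart, ← Finset.insert_Ico_add_one_left_eq_Ico hk,
      Finset.sum_insert (by simp), Finset.Ico_eq_empty_of_le hk.le,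
      Finset.Ico_eq_empty_of_le (show k + 1 ≤ 0 by omega)]
    ring

theorem blockStart_lt_succ (k : ℤ) : blockStart x k < blockStart x (k + 1) := by
  rw [blockStart_succ]
  cases x k <;> simp [block]

theorem blockStart_strictMono : StrictMono (blockStart x) :=
  strictMono_int_of_lt_succ blockStart_lt_succ

theorem eq_add_blockStart {f : ℤ → ℤ} (hf : ∀ k, f (k + 1) = f k + (block (x k)).length) (k : ℤ) :
    f k = f 0 + blockStart x k := by
  induction k using Int.induction_on with
  | zero => simp
  | succ k ih => rw [hf, ih, blockStart_succ, add_assoc]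
  | pred k ih =>
    have hf' := hf (-k - 1)
    have hb := blockStart_succ (x := x) (-k - 1)
    rw [sub_add_cancel] at hf' hb
    linarith

theorem blockStart_add_length (k : ℤ) (n : ℕ) :
    blockStart x (k + n) = blockStart x k + ((window x k n).flatMap block).length := by
  induction n generalizing k with
  | zero => simp [window]
  | succ n ih =>
    rw [show k + (n + 1 : ℕ) = k + 1 + n by push_cast; ring, ih, blockStart_succ, window_succ,
      List.flatMap_cons, List.length_append]
    push_cast
    ring

theorem subst_eq_false_iff (i : ℤ) : subst x i = false ↔ i ∈ Set.range (blockStart x) := by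
  simp [subst]

theorem subst_blockStart (k : ℤ) : subst x (blockStart x k) = false :=
  (subst_eq_false_iff _).2 ⟨k, rfl⟩

theorem subst_blockStart_add_one (k : ℤ) : subst x (blockStart x k + 1) = !x k := by
  cases hk : x k with
  | true =>
    have : blockStart x (k + 1) = blockStart x k + 1 := by simp [blockStart_succ, hk, block]
    rw [← this, subst_blockStart]; rfl
  | false =>
    have : blockStart x (k + 1) = blockStart x k + 2 := by simp [blockStart_succ, hk, block]
    rw [Bool.not_false, ← Bool.not_eq_false, subst_eq_false_iff]
    rintro ⟨j, hj⟩
    have hmono := blockStart_strictMono (x := x)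
    have h₁ : k < j := hmono.lt_iff_lt.1 (by omega)
    have h₂ : j < k + 1 := hmono.lt_iff_lt.1 (by omega)
    omega

theorem eq_subst_of (h₀ : ∀ k, z (blockStart x k) = false)
    (h₁ : ∀ k, x k = false → z (blockStart x k + 1) = true) : z = subst x := by
  funext i
  obtain ⟨k, hk, hk'⟩ := exists_apply_le_lt_apply_succ (f := blockStart x) blockStart_lt_succ i
  rw [blockStart_succ] at hk'
  rcases hk.eq_or_lt with rfl | hlt
  · rw [h₀, subst_blockStart]
  · cases hx : x k
    · obtain rfl : i = blockStart x k + 1 := by simp [hx, block] at hk'; omega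
      rw [h₁ k hx, subst_blockStart_add_one, hx, Bool.not_false]
    · simp [hx, block] at hk'; omega

theorem not_isFactor_subst_bb : ¬ IsFactor (subst x) [true, true] := by
  rw [isFactor_pair]
  rintro ⟨i, hi, hi'⟩
  obtain ⟨k, hk, hk'⟩ := exists_apply_le_lt_apply_succ (f := blockStart x) blockStart_lt_succ i
  rcases hk.eq_or_lt with rfl | hlt
  · rw [subst_blockStart] at hi; cases hi
  · have hlen : (block (x k)).length ≤ 2 := by cases x k <;> simp [block]
    have hnext : blockStart x (k + 1) = i + 1 := by rw [blockStart_succ] at hk' ⊢; omega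
    rw [← hnext, subst_blockStart] at hi'
    cases hi'

theorem subst_shift {t : ℤ} (h : ∀ i, x i = y (i + t)) (i : ℤ) :
    subst x i = subst y (i + blockStart y t) := by
  have hB (k : ℤ) : blockStart y (k + t) = blockStart x k + blockStart y t := by
    have := eq_add_blockStart (x := x) (f := fun k => blockStart y (k + t))
      (fun k => by rw [add_right_comm, blockStart_succ, h]) k
    simpa [add_comm] using this
  refine (congrFun (eq_subst_of (z := fun i => subst y (i + blockStart y t)) (fun k => ?_)
    (fun k hk => ?_)) i).symm
  · simp only [← hB, subst_blockStart]
  · simp only [add_right_comm _ (1 : ℤ), ← hB, subst_blockStart_add_one, ← h, hk, Bool.not_false]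

theorem IsShift.subst (h : IsShift x y) : IsShift (subst x) (subst y) :=
  let ⟨_, ht⟩ := h
  ⟨_, subst_shift ht⟩

theorem HasPeriod.subst {m : ℕ} (hm : HasPeriod x m) :
    HasPeriod (subst x) ((window x 0 m).flatMap block).length := by
  intro i
  have := blockStart_add_length (x := x) 0 m
  simp only [zero_add, blockStart_zero] at this
  rw [← this]
  exact (subst_shift (fun i => (hm i).symm) i).symm

theorem window_subst (k : ℤ) (n : ℕ) :
    window (subst x) (blockStart x k) ((window x k n).flatMap block).length =
      (window x k n).flatMap block := by
  induction n generalizing k with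
  | zero => simp [window]
  | succ n ih =>
    have hblock : window (subst x) (blockStart x k) (block (x k)).length = block (x k) := by
      cases hx : x k <;>
        simp [block, window, List.range_succ, subst_blockStart, subst_blockStart_add_one, hx]
    rw [window_succ, List.flatMap_cons, List.length_append, window_add, hblock,
      ← blockStart_succ, ih]

theorem length_flatMap_block (u : List Bool) :
    (u.flatMap block).length = u.length + u.count false := by
  induction u with
  | nil => simp
  | cons c u ih => cases c <;> simp [block, ih] <;> ring

theorem count_flatMap_block (u : List Bool) : (u.flatMap block).count false = u.length := by
  induction u with
  | nil => simp
  | cons c u ih => cases c <;> simp [block, ih]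

/- The trailing `a` forces the image of the last letter of `u` to be a complete block. -/
def liftForbidden (u : List Bool) : List Bool :=
  u.flatMap block ++ [false]

@[simp]
theorem liftForbidden_nil : liftForbidden [] = [false] := rfl

@[simp]
theorem liftForbidden_cons (c : Bool) (u : List Bool) :
    liftForbidden (c :: u) = block c ++ liftForbidden u := by
  simp [liftForbidden]

theorem liftForbidden_eq_cons (u : List Bool) : ∃ l, liftForbidden u = false :: l := by
  cases u with
  | nil => exact ⟨[], rfl⟩
  | cons c u => cases c <;> simp [block]

theorem liftForbidden_injective : Function.Injective liftForbidden := by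
  intro u v h
  induction u generalizing v with
  | nil =>
    cases v with
    | nil => rfl
    | cons c v =>
      obtain ⟨l, hl⟩ := liftForbidden_eq_cons v
      cases c <;> simp [block, hl] at h
  | cons c u ih =>
    cases v with
    | nil =>
      obtain ⟨l, hl⟩ := liftForbidden_eq_cons u
      cases c <;> simp [block, hl] at h
    | cons d v =>
      obtain ⟨l, hl⟩ := liftForbidden_eq_cons u
      obtain ⟨l', hl'⟩ := liftForbidden_eq_cons v
      cases c <;> cases d <;> simp [block] at h
      · rw [ih h]
      · simp [hl'] at h
      · simp [hl] at h
      · rw [ih h]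

theorem window_subst_liftForbidden {u : List Bool} {k : ℤ} (h : window x k u.length = u) :
    window (subst x) (blockStart x k) (liftForbidden u).length = liftForbidden u := by
  have hend := blockStart_add_length (x := x) k u.length
  rw [h] at hend
  have hblocks := window_subst (x := x) k u.length
  rw [h] at hblocks
  rw [liftForbidden, List.length_append, window_add, hblocks, ← hend]
  simp [window, subst_blockStart]

theorem subst_eq_false_of_window_liftForbidden {u : List Bool} {i : ℤ}
    (h : window (subst x) i (liftForbidden u).length = liftForbidden u) : subst x i = false := by
  obtain ⟨l, hl⟩ := liftForbidden_eq_cons u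
  rw [hl, List.length_cons, window_succ] at h
  exact (List.cons.inj h).1

theorem exists_window_of_window_subst_liftForbidden {u : List Bool} {i : ℤ}
    (h : window (subst x) i (liftForbidden u).length = liftForbidden u) :
    ∃ k, blockStart x k = i ∧ window x k u.length = u := by
  induction u generalizing i with
  | nil => simpa [window] using (subst_eq_false_iff i).1 (subst_eq_false_of_window_liftForbidden h)
  | cons c u ih =>
    obtain ⟨k, rfl⟩ := (subst_eq_false_iff i).1 (subst_eq_false_of_window_liftForbidden h)
    rw [liftForbidden_cons, List.length_append, window_add] at h
    obtain ⟨hblock, hrest⟩ := List.append_inj h (by simp)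
    obtain ⟨k', hk', hwin⟩ := ih hrest
    have hc : x k = c := by
      rw [← Bool.not_inj_iff, ← subst_blockStart_add_one]
      cases c
      · simp [block, window, List.range_succ] at hblock
        exact hblock.2
      · simpa [block] using subst_eq_false_of_window_liftForbidden hrest
    obtain rfl : k' = k + 1 :=
      blockStart_strictMono.injective (by rw [hk', blockStart_succ, hc])
    exact ⟨k, rfl, by rw [List.length_cons, window_succ, hc, hwin]⟩

theorem isFactor_subst_liftForbidden_iff {u : List Bool} :
    IsFactor (subst x) (liftForbidden u) ↔ IsFactor x u := by
  simp only [isFactor_iff_window]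
  constructor
  · rintro ⟨i, hi⟩
    obtain ⟨k, -, hk⟩ := exists_window_of_window_subst_liftForbidden hi
    exact ⟨k, hk⟩
  · rintro ⟨k, hk⟩
    exact ⟨_, window_subst_liftForbidden hk⟩

theorem exists_isShift_subst (hz : ¬ IsFactor z [true, true]) : ∃ y, IsShift z (subst y) := by
  have hbb : ∀ i, z i = true → z (i + 1) = false := by
    intro i hi
    by_contra h
    exact hz (isFactor_pair.2 ⟨i, hi, by simpa using h⟩)
  -- The `a`s of `z` are the block starts; `e` below enumerates them in increasing order.
  set next : ℤ → ℤ := fun i => i + (block (!z (i + 1))).length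
  set prev : ℤ → ℤ := fun i => if z (i - 1) then i - 2 else i - 1
  have hnext : Set.MapsTo next {i | z i = false} {i | z i = false} := by
    intro i _
    cases h : z (i + 1) with
    | false => simp [next, block, h]
    | true => simpa [next, block, h, add_assoc] using hbb _ h
  have hprev : Set.MapsTo prev {i | z i = false} {i | z i = false} := by
    intro i _
    cases h : z (i - 1) with
    | false => simp [prev, h]
    | true =>
      have := hbb (i - 2)
      simp only [show i - 2 + 1 = i - 1 by ring, h] at this
      simpa [prev, h] using this
  have hnext_prev : ∀ i ∈ {i | z i = false}, next (prev i) = i := by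
    intro i (hi : z i = false)
    cases h : z (i - 1)
    · simp [next, prev, block, h, hi]
    · simp [next, prev, block, h, show i - 2 + 1 = i - 1 by ring]
  obtain ⟨i₀, hi₀⟩ : ∃ i, z i = false := by
    by_contra! h
    exact hz (isFactor_pair.2 ⟨0, by simpa using h 0, by simpa using h 1⟩)
  obtain ⟨e, he, hsucc⟩ := exists_int_orbit hnext hprev hnext_prev (a₀ := i₀) hi₀
  set y : ℤ → Bool := fun k => !z (e k + 1)
  have he_eq (k : ℤ) : e k = e 0 + blockStart y k := eq_add_blockStart hsucc k
  have hzy := eq_subst_of (z := fun i => z (i + e 0)) (x := y)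
    (fun k => by simpa [add_comm, ← he_eq] using he k)
    (fun k hk => by simpa [y, add_right_comm _ (1 : ℤ), add_comm _ (e 0), ← he_eq] using hk)
  exact ⟨y, -e 0, fun i => by rw [← congrFun hzy, neg_add_cancel_right]⟩

theorem Defines.subst {S : Set (List Bool)} (h : Defines S x) :
    Defines (insert [true, true] (liftForbidden '' S)) (subst x) := by
  refine ⟨?_, fun z hz => ?_⟩
  · rintro u (rfl | ⟨v, hv, rfl⟩)
    · exact not_isFactor_subst_bb
    · exact isFactor_subst_liftForbidden_iff.not.2 (h.1 v hv)
  · obtain ⟨y, hzy⟩ := exists_isShift_subst (hz _ (Set.mem_insert _ _))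
    have hy : ∀ u ∈ S, ¬ IsFactor y u := fun u hu hyu =>
      hz _ (Set.mem_insert_of_mem _ ⟨u, hu, rfl⟩)
        ((isFactor_subst_liftForbidden_iff.2 hyu).of_isShift hzy)
    exact hzy.trans (IsShift.subst (h.2 y hy))

noncomputable def word : ℕ → ℤ → Bool
  | 0 => fun _ => false
  | n + 1 => subst (word n)

def forbidden : ℕ → Finset (List Bool)
  | 0 => {[true]}
  | n + 1 => insert [true, true] ((forbidden n).image liftForbidden)

theorem hasPeriod_word_and_count (n : ℕ) :
    HasPeriod (word n) (Nat.fib (n + 2)) ∧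
      (window (word n) 0 (Nat.fib (n + 2))).count false = Nat.fib (n + 1) := by
  induction n with
  | zero => exact ⟨fun _ => rfl, rfl⟩
  | succ n ih =>
    obtain ⟨hp, hcount⟩ := ih
    have hlen : ((window (word n) 0 (Nat.fib (n + 2))).flatMap block).length = Nat.fib (n + 3) := by
      rw [length_flatMap_block, hcount, length_window, Nat.fib_add_two (n := n + 1), add_comm]
    have hwin := window_subst (x := word n) 0 (Nat.fib (n + 2))
    rw [blockStart_zero, hlen] at hwin
    refine ⟨hlen ▸ HasPeriod.subst hp, ?_⟩
    rw [word, hwin, count_flatMap_block, length_window]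

theorem isLeastPeriod_word (n : ℕ) : IsLeastPeriod (word n) (Nat.fib (n + 2)) := by
  obtain ⟨hp, hcount⟩ := hasPeriod_word_and_count n
  refine isLeastPeriod_of_coprime_count false hp ?_
  rw [hcount]
  exact Nat.fib_coprime_fib_succ (n + 1)

theorem card_forbidden (n : ℕ) : (forbidden n).card = n + 1 := by
  induction n with
  | zero => rfl
  | succ n ih =>
    have hnot : [true, true] ∉ (forbidden n).image liftForbidden := by
      simp only [Finset.mem_image, not_exists, not_and]
      intro u _ hu
      obtain ⟨l, hl⟩ := liftForbidden_eq_cons u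
      simp [hl] at hu
    rw [forbidden, Finset.card_insert_of_notMem hnot,
      Finset.card_image_of_injective _ liftForbidden_injective, ih]

theorem defines_word (n : ℕ) : Defines (forbidden n) (word n) := by
  induction n with
  | zero =>
    refine ⟨by simp [forbidden, word, isFactor_iff_window, window], fun z hz => ⟨0, fun i => ?_⟩⟩
    have hzb : ∀ j, z j = false := by
      simpa [isFactor_iff_window, window] using hz [true] (by simp [forbidden])
    exact hzb i
  | succ n ih =>
    rw [forbidden, Finset.coe_insert, Finset.coe_image]
    exact Defines.subst ih

end Fibonacci

theorem fibonacci_bound_attained (c : ℕ) (hc : 1 ≤ c) :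
    ∃ (w : ℤ → Bool) (S : Finset (List Bool)),
      IsLeastPeriod w (Nat.fib (c + 1)) ∧ S.card = c ∧ Defines (↑S) w := by
  obtain ⟨n, rfl⟩ : ∃ n, c = n + 1 := ⟨c - 1, by omega⟩
  exact ⟨Fibonacci.word n, Fibonacci.forbidden n, Fibonacci.isLeastPeriod_word n,
    Fibonacci.card_forbidden n, Fibonacci.defines_word n⟩
end
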